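/- Let J = {k_1, ..., k_s} ⊆ {0,...,M̃-1} with |J| = s ≥ 1 and M̃ ≥ s. Let q be such that P_{q-1} < s ≤ P_q (where P_q denotes the q-th prime and P_0 := 1), and let K = max(1, 2(s-1)⌈log_{P_q}(M̃) - 1⌉). Then there exist L ≤ log₂(s) + 1 primes P̃_0, ..., P̃_{L-1}, all among the K smallest primes that are at least P_q, such that every element k of J satisfies, for at least one index ℓ, k ≢ h (mod P̃_ℓ) for all h ∈ J \ {k}. -/

import Mathlib

/-!
Call `k ∈ J` a collision modulo `m` if it is congruent modulo `m` to another element of `J`.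
A nonzero difference `|k - h| < M̃` is divisible by fewer than `log_{P_q} M̃` primes `≥ P_q`, so,
counting pairs (prime, colliding element) for any `B ⊆ J`, the `K` candidate primes carry at most
`|B| (s - 1) ⌈log_{P_q} M̃ - 1⌉ ≤ |B| K / 2` collisions in total. Hence some candidate prime
isolates at least half of `B`; repeating this on the elements not yet isolated exhausts `J`
after `⌊log₂ s⌋ + 1` primes.
-/

/-- The `q`-th prime number (`P 1 = 2`, `P 2 = 3`, ...), with the convention `P 0 = 1`. -/
noncomputable def nthPrime (q : ℕ) : ℕ := if q = 0 then 1 else Nat.nth Nat.Prime (q - 1)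

open Finset

lemma nthPrime_strictMono : StrictMono nthPrime := by
  refine strictMono_nat_of_lt_succ fun n => ?_
  rcases n with _ | n
  · simp [nthPrime, Nat.nth_prime_zero_eq_two]
  · simpa [nthPrime] using Nat.nth_strictMono Nat.infinite_setOfPred_prime n.lt_succ_self

lemma nthPrime_prime {j : ℕ} (hj : j ≠ 0) : (nthPrime j).Prime := by
  simp [nthPrime, hj, Nat.prime_nth_prime]

lemma prime_and_le_of_mem_image_nthPrime {q K p : ℕ} (hq : 2 ≤ nthPrime q)
    (hp : p ∈ (Ico q (q + K)).image nthPrime) : p.Prime ∧ nthPrime q ≤ p := by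
  obtain ⟨j, hj, rfl⟩ := mem_image.1 hp
  have hq0 : q ≠ 0 := by rintro rfl; simp [nthPrime] at hq
  exact ⟨nthPrime_prime (by grind), nthPrime_strictMono.monotone (mem_Ico.1 hj).1⟩

lemma pow_card_le_of_prime_dvd {b d : ℕ} {I : Finset ℕ}
    (hI : ∀ p ∈ I, p.Prime ∧ b ≤ p ∧ p ∣ d) (hd : d ≠ 0) : b ^ I.card ≤ d :=
  calc b ^ I.card ≤ ∏ p ∈ I, p := pow_card_le_prod I id b fun p hp => (hI p hp).2.1
    _ ≤ d := Nat.le_of_dvd (Nat.pos_of_ne_zero hd) <|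
      prod_primes_dvd d (fun p hp => (hI p hp).1.prime) fun p hp => (hI p hp).2.2

lemma le_toNat_ceil_logb_sub_one {b x : ℝ} {c : ℕ} (hb : 1 < b) (hc : b ^ c < x) :
    c ≤ (⌈Real.logb b x - 1⌉).toNat := by
  have hlog : (c : ℝ) < Real.logb b x := by
    rwa [Real.lt_logb_iff_rpow_lt hb ((pow_pos (by linarith) c).trans hc), Real.rpow_natCast]
  have hceil : (c : ℤ) ≤ ⌈Real.logb b x - 1⌉ := by
    rw [Int.le_ceil_iff]; push_cast; linarith
  omega

lemma card_filter_modEq_le {Ps : Finset ℕ} {b x k h : ℕ} (hPs : ∀ p ∈ Ps, p.Prime ∧ b ≤ p)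
    (hb : 2 ≤ b) (hk : k < x) (hh : h < x) (hkh : k ≠ h) :
    (Ps.filter (k ≡ h [MOD ·])).card ≤ (⌈Real.logb b x - 1⌉).toNat := by
  set d := ((h : ℤ) - k).natAbs
  have hdvd : b ^ (Ps.filter (k ≡ h [MOD ·])).card ≤ d := by
    refine pow_card_le_of_prime_dvd (fun p hp => ?_) (by omega)
    obtain ⟨hp, hmod⟩ := mem_filter.1 hp
    exact ⟨(hPs p hp).1, (hPs p hp).2, Int.natCast_dvd.1 (Nat.modEq_iff_dvd.1 hmod)⟩
  exact le_toNat_ceil_logb_sub_one (by exact_mod_cast hb)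
    (by exact_mod_cast hdvd.trans_lt (by omega : d < x))

def collisions (J : Finset ℕ) (m : ℕ) : Finset ℕ :=
  J.filter fun k => ∃ h ∈ J, h ≠ k ∧ k ≡ h [MOD m]

section Covering

variable {J Ps : Finset ℕ} {D : ℕ}
  (hD : ∀ k ∈ J, ∀ h ∈ J, h ≠ k → (Ps.filter (k ≡ h [MOD ·])).card ≤ D)
include hD

lemma card_filter_mem_collisions_le {k : ℕ} (hk : k ∈ J) :
    (Ps.filter (k ∈ collisions J ·)).card ≤ (J.card - 1) * D := by
  have hsub : Ps.filter (k ∈ collisions J ·) ⊆ (J.erase k).biUnion fun h => Ps.filter (k ≡ h [MOD ·]) := by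
    intro p hp
    obtain ⟨hpPs, -, h, hh, hne, hmod⟩ := by simpa [collisions] using hp
    exact mem_biUnion.2 ⟨h, mem_erase.2 ⟨hne, hh⟩, mem_filter.2 ⟨hpPs, hmod⟩⟩
  calc _ ≤ _ := card_le_card hsub
    _ ≤ (J.erase k).card * D := card_biUnion_le_card_mul _ _ _ fun h hh =>
        hD k hk h (mem_erase.1 hh).2 (mem_erase.1 hh).1
    _ = (J.card - 1) * D := by rw [card_erase_of_mem hk]

lemma exists_two_mul_card_filter_mem_collisions_le (hPs : Ps.Nonempty)
    (hK : 2 * ((J.card - 1) * D) ≤ Ps.card) {B : Finset ℕ} (hB : B ⊆ J) :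
    ∃ p ∈ Ps, 2 * (B.filter (· ∈ collisions J p)).card ≤ B.card := by
  refine exists_le_of_sum_le hPs ?_
  calc ∑ p ∈ Ps, 2 * (B.filter (· ∈ collisions J p)).card
      = 2 * ∑ k ∈ B, (Ps.filter (k ∈ collisions J ·)).card := by
        rw [← mul_sum]
        exact congrArg _ (sum_card_bipartiteAbove_eq_sum_card_bipartiteBelow _)
    _ ≤ 2 * ∑ _k ∈ B, (J.card - 1) * D := by
        gcongr with k hk
        exact card_filter_mem_collisions_le hD (hB hk)
    _ = B.card * (2 * ((J.card - 1) * D)) := by rw [sum_const, smul_eq_mul]; ring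
    _ ≤ B.card * Ps.card := by gcongr
    _ = ∑ _p ∈ Ps, B.card := by rw [sum_const, smul_eq_mul, mul_comm]

lemma exists_subset_forall_not_mem_collisions (hPs : Ps.Nonempty)
    (hK : 2 * ((J.card - 1) * D) ≤ Ps.card) (n : ℕ) :
    ∀ B ⊆ J, B.card < 2 ^ n →
      ∃ T ⊆ Ps, T.card ≤ n ∧ ∀ k ∈ B, ∃ p ∈ T, k ∉ collisions J p := by
  induction n with
  | zero =>
    intro B _ hBn
    obtain rfl : B = ∅ := card_eq_zero.1 (by simpa using hBn)
    exact ⟨∅, empty_subset _, le_rfl, by simp⟩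
  | succ n ih =>
    intro B hB hBn
    obtain ⟨p, hp, hhalf⟩ := exists_two_mul_card_filter_mem_collisions_le hD hPs hK hB
    obtain ⟨T, hTPs, hTn, hT⟩ := ih (B.filter (· ∈ collisions J p))
      ((filter_subset _ _).trans hB) (by rw [pow_succ] at hBn; omega)
    refine ⟨insert p T, insert_subset hp hTPs, (card_insert_le _ _).trans (by omega), ?_⟩
    intro k hk
    by_cases hkp : k ∈ collisions J p
    · obtain ⟨p', hp', hk'⟩ := hT k (mem_filter.2 ⟨hk, hkp⟩)
      exact ⟨p', mem_insert_of_mem hp', hk'⟩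
    · exact ⟨p, mem_insert_self _ _, hkp⟩

end Covering

theorem stmt_2_general (Mt s q : ℕ) (J : Finset ℕ) (hJ : J ⊆ Finset.range Mt)
    (hcard : J.card = s) (hq2 : s ≤ nthPrime q)
    (K : ℕ)
    (hK : K = max 1 (2 * (s - 1) *
      (⌈Real.logb (nthPrime q) (Mt : ℝ) - 1⌉).toNat)) :
    ∃ (L : ℕ) (Pt : Fin L → ℕ),
      (L : ℝ) ≤ Real.logb 2 (s : ℝ) + 1 ∧
      (∀ ℓ : Fin L, ∃ j ∈ Finset.Ico q (q + K), Pt ℓ = nthPrime j) ∧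
      (∀ k ∈ J, ∃ ℓ : Fin L, ∀ h ∈ J, h ≠ k → ¬ (k ≡ h [MOD Pt ℓ])) := by
  set Ps := (Ico q (q + K)).image nthPrime
  have hPsK : Ps.card = K := by simp [Ps, card_image_of_injective _ nthPrime_strictMono.injective]
  have hD : ∀ k ∈ J, ∀ h ∈ J, h ≠ k →
      (Ps.filter (k ≡ h [MOD ·])).card ≤ (⌈Real.logb (nthPrime q) (Mt : ℝ) - 1⌉).toNat := by
    intro k hk h hh hne
    have hq : 2 ≤ nthPrime q := hq2.trans' (hcard ▸ one_lt_card.2 ⟨k, hk, h, hh, hne.symm⟩)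
    exact card_filter_modEq_le (fun p hp => prime_and_le_of_mem_image_nthPrime hq hp) hq
      (mem_range.1 (hJ hk)) (mem_range.1 (hJ hh)) hne.symm
  obtain ⟨T, hTPs, hTcard, hT⟩ := exists_subset_forall_not_mem_collisions hD
    (card_pos.1 (by omega)) (by rw [hPsK, hK, hcard, ← mul_assoc]; exact le_max_right _ _)
    (Nat.log 2 s + 1) J subset_rfl (hcard ▸ Nat.lt_pow_succ_log_self one_lt_two s)
  refine ⟨T.card, fun ℓ => T.equivFin.symm ℓ, ?_, fun ℓ => ?_, fun k hk => ?_⟩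
  · have hlog := Real.natLog_le_logb s 2
    have hT' : (T.card : ℝ) ≤ Nat.log 2 s + 1 := by exact_mod_cast hTcard
    push_cast at hlog
    linarith
  · obtain ⟨j, hj, hjp⟩ := mem_image.1 (hTPs (T.equivFin.symm ℓ).2)
    exact ⟨j, hj, hjp.symm⟩
  · obtain ⟨p, hpT, hp⟩ := hT k hk
    refine ⟨T.equivFin ⟨p, hpT⟩, ?_⟩
    simpa [collisions, hk] using hp

theorem stmt_2 (Mt s q : ℕ) (J : Finset ℕ) (hJ : J ⊆ Finset.range Mt)
    (hcard : J.card = s) (hs : 1 ≤ s) (hsM : s ≤ Mt)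
    (hq1 : nthPrime (q - 1) < s) (hq2 : s ≤ nthPrime q)
    (K : ℕ)
    (hK : K = max 1 (2 * (s - 1) *
      (⌈Real.logb (nthPrime q) (Mt : ℝ) - 1⌉).toNat)) :
    ∃ (L : ℕ) (Pt : Fin L → ℕ),
      (L : ℝ) ≤ Real.logb 2 (s : ℝ) + 1 ∧
      (∀ ℓ : Fin L, ∃ j ∈ Finset.Ico q (q + K), Pt ℓ = nthPrime j) ∧
      (∀ k ∈ J, ∃ ℓ : Fin L, ∀ h ∈ J, h ≠ k → ¬ (k ≡ h [MOD Pt ℓ])) :=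
  stmt_2_general Mt s q J hJ hcard hq2 K hK
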